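/- arXiv:2302.10865 — 5 statements merged into one kernel-verified Lean document; each statement's English description precedes it below -/
import Mathlib

section
/- Let $V_1, \ldots, V_n$ be finite nonempty families of vectors in the closed Euclidean unit ball of $\mathbb{R}^d$ such that $0 \in \mathrm{conv}(V_1) + \cdots + \mathrm{conv}(V_n)$. Then there exists a selection of vectors $v_i \in V_i$ for each $i \in [n]$ such that $\|v_1 + \cdots + v_n\|_2 \leq \sqrt{d}$. -/
/-!
By the Shapley–Folkman lemma, `0 = ∑ yᵢ` with `yᵢ ∈ conv Vᵢ` and all but at most `d` of the `yᵢ`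
already in `Vᵢ`; it follows from a conic Carathéodory theorem applied to the lifted points
`(v, eᵢ) ∈ ℝᵈ × ℝⁿ`, `v ∈ Vᵢ`, since every index `i` must occur among at most `d + n` linearly
independent ones. The remaining `yᵢ` are rounded one at a time: for the current error `s` pick
`v ∈ Vᵢ` with `⟪s - yᵢ, v⟫ ≤ ⟪s - yᵢ, yᵢ⟫`; then
`‖s + v - yᵢ‖² = ‖s‖² + 2⟪s - yᵢ, v - yᵢ⟫ + ‖v‖² - ‖yᵢ‖² ≤ ‖s‖² + 1`.
-/

open scoped Pointwise
open Finset Module RealInnerProductSpace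

section ConicCaratheodory

variable {𝕜 M ι : Type*} [Field 𝕜] [LinearOrder 𝕜] [IsStrictOrderedRing 𝕜]
  [AddCommGroup M] [Module 𝕜 M] {p : ι → M}

/-- Shift the coefficients along a linear relation by the largest step keeping them nonnegative. -/
lemma exists_nonneg_coeff_eq_zero_of_not_linearIndepOn {T : Finset ι}
    (hT : ¬LinearIndepOn 𝕜 p T) {a : ι → 𝕜} (ha : ∀ i ∈ T, 0 ≤ a i) :
    ∃ k ∈ T, ∃ b : ι → 𝕜, (∀ i ∈ T, 0 ≤ b i) ∧ b k = 0 ∧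
      ∑ i ∈ T, b i • p i = ∑ i ∈ T, a i • p i := by
  obtain ⟨c, hc, hpos⟩ : ∃ c : ι → 𝕜, ∑ i ∈ T, c i • p i = 0 ∧ {i ∈ T | 0 < c i}.Nonempty := by
    obtain ⟨f, hf, j, hj, hfj⟩ := not_linearIndepOn_finset_iff.mp hT
    rcases hfj.lt_or_gt with hneg | hpos
    · exact ⟨-f, by simp [neg_smul, hf], j, mem_filter.mpr ⟨hj, by simpa using hneg⟩⟩
    · exact ⟨f, hf, j, mem_filter.mpr ⟨hj, hpos⟩⟩
  obtain ⟨k, hk, hmin⟩ := exists_min_image _ (fun i => a i / c i) hpos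
  obtain ⟨hkT, hck⟩ := mem_filter.mp hk
  have ht : 0 ≤ a k / c k := div_nonneg (ha k hkT) hck.le
  refine ⟨k, hkT, fun i => a i - a k / c k * c i, fun i hi => ?_, by field_simp; ring, ?_⟩
  · rcases le_or_gt (c i) 0 with hci | hci
    · nlinarith [ha i hi]
    · have := (le_div_iff₀ hci).mp (hmin i (mem_filter.mpr ⟨hi, hci⟩))
      linarith
  · simp only [sub_smul, sum_sub_distrib, mul_smul, ← smul_sum, hc, smul_zero, sub_zero]

theorem exists_linearIndepOn_nonneg_sum_smul_eq (T : Finset ι) {a : ι → 𝕜}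
    (ha : ∀ i ∈ T, 0 ≤ a i) :
    ∃ S ⊆ T, ∃ b : ι → 𝕜, (∀ i ∈ S, 0 ≤ b i) ∧ LinearIndepOn 𝕜 p S ∧
      ∑ i ∈ S, b i • p i = ∑ i ∈ T, a i • p i := by
  classical
  induction T using Finset.strongInduction generalizing a with
  | H T ih =>
  by_cases hT : LinearIndepOn 𝕜 p T
  · exact ⟨T, subset_rfl, a, ha, hT, rfl⟩
  obtain ⟨k, hk, b, hb, hbk, hsum⟩ := exists_nonneg_coeff_eq_zero_of_not_linearIndepOn hT ha
  obtain ⟨S, hS, b', hb', hind, hsum'⟩ :=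
    ih (T.erase k) (erase_ssubset hk) fun i hi => hb i (mem_of_mem_erase hi)
  refine ⟨S, hS.trans (erase_subset k T), b', hb', hind, ?_⟩
  rw [hsum', ← hsum, ← sum_erase_add _ _ hk, hbk, zero_smul, add_zero]

end ConicCaratheodory

/-- **Shapley–Folkman lemma** -/
theorem exists_forall_notMem_card_le_finrank_of_mem_sum_convexHull
    {𝕜 E ι : Type*} [Field 𝕜] [LinearOrder 𝕜] [IsStrictOrderedRing 𝕜]
    [AddCommGroup E] [Module 𝕜 E] [FiniteDimensional 𝕜 E] [Fintype ι]
    (V : ι → Finset E) {x : E} (hx : x ∈ ∑ i, convexHull 𝕜 (V i : Set E)) :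
    ∃ y : ι → E, (∀ i, y i ∈ convexHull 𝕜 (V i : Set E)) ∧ ∑ i, y i = x ∧
      ∃ F : Finset ι, #F ≤ finrank 𝕜 E ∧ ∀ i ∉ F, y i ∈ V i := by
  classical
  obtain ⟨g, hg, rfl⟩ := (Set.mem_fintype_sum _ _).mp hx
  choose w hw0 hw1 hwg using fun i => mem_convexHull'.mp (hg i)
  obtain ⟨T, hT, μ, hμ, hind, hsum⟩ :=
    exists_linearIndepOn_nonneg_sum_smul_eq
      (p := fun s : Σ _ : ι, E => (s.2, (Pi.single s.1 1 : ι → 𝕜)))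
      (univ.sigma V) (a := fun s => w s.1 s.2) (fun s hs => hw0 s.1 s.2 (mem_sigma.mp hs).2)
  have hfst : ∑ s ∈ T, μ s • s.2 = ∑ i, g i := by
    simpa [Prod.fst_sum, sum_sigma, hwg] using congrArg Prod.fst hsum
  set fiber : ι → Finset (Σ _ : ι, E) := fun i => {s ∈ T | s.1 = i}
  have hsnd (i : ι) : ∑ s ∈ fiber i, μ s = 1 := by
    simpa [fiber, Prod.snd_sum, sum_sigma, Pi.single_apply, sum_filter, hw1, eq_comm (a := i)]
      using congrFun (congrArg Prod.snd hsum) i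
  have hfiber_nonempty (i : ι) : (fiber i).Nonempty := by
    by_contra h
    simpa [not_nonempty_iff_eq_empty.mp h] using hsnd i
  have hfiber_mem {i : ι} {s : Σ _ : ι, E} (hs : s ∈ fiber i) : s.2 ∈ V i := by
    obtain ⟨hsT, rfl⟩ := mem_filter.mp hs
    exact (mem_sigma.mp (hT hsT)).2
  have hcard : Fintype.card ι + #{i | 1 < #(fiber i)} ≤ finrank 𝕜 E + Fintype.card ι :=
    calc Fintype.card ι + #{i | 1 < #(fiber i)}
        = ∑ i, (1 + if 1 < #(fiber i) then 1 else 0) := by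
          simp [sum_add_distrib, sum_boole]
      _ ≤ ∑ i, #(fiber i) := sum_le_sum fun i _ => by
          have := (hfiber_nonempty i).card_pos
          split_ifs <;> omega
      _ = #T := (card_eq_sum_card_fiberwise fun s _ => mem_univ s.1).symm
      _ ≤ finrank 𝕜 E + Fintype.card ι := by
          simpa [finrank_prod, finrank_fintype_fun_eq_card] using
            hind.linearIndependent.fintype_card_le_finrank
  refine ⟨fun i => ∑ s ∈ fiber i, μ s • s.2, fun i => ?_, ?_, ({i | 1 < #(fiber i)} : Finset ι),
    by omega, fun i hi => ?_⟩
  · exact (convex_convexHull 𝕜 _).sum_mem (fun s hs => hμ s (mem_filter.mp hs).1) (hsnd i)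
      fun s hs => subset_convexHull 𝕜 _ (hfiber_mem hs)
  · exact (sum_fiberwise T (·.1) fun s => μ s • s.2).trans hfst
  · obtain ⟨s, hs⟩ : ∃ s, fiber i = {s} := card_eq_one.mp <| by
      have := (hfiber_nonempty i).card_pos
      have : #(fiber i) ≤ 1 := by simpa using hi
      omega
    have hμs : μ s = 1 := by simpa [fiber, hs] using hsnd i
    simpa [hs, hμs] using hfiber_mem (hs ▸ mem_singleton_self s)

section Rounding

variable {E ι : Type*} [NormedAddCommGroup E] [InnerProductSpace ℝ E]

lemma exists_mem_norm_add_sub_sq_le {s : Set E} (hs : ∀ v ∈ s, ‖v‖ ≤ 1) {x : E}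
    (hx : x ∈ convexHull ℝ s) (y : E) : ∃ v ∈ s, ‖y + (v - x)‖ ^ 2 ≤ ‖y‖ ^ 2 + 1 := by
  have hconcave := (innerₛₗ ℝ (y - x)).concaveOn (convex_convexHull ℝ s)
  obtain ⟨v, hv, hle⟩ := hconcave.exists_le_of_mem_convexHull (subset_convexHull ℝ s) hx
  refine ⟨v, hv, ?_⟩
  have hexpand : ‖y + (v - x)‖ ^ 2 = ‖y‖ ^ 2 + 2 * ⟪y - x, v - x⟫ + ‖v‖ ^ 2 - ‖x‖ ^ 2 := by
    simp only [← real_inner_self_eq_norm_sq, inner_add_left, inner_add_right, inner_sub_left,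
      inner_sub_right, real_inner_comm]
    ring
  have hv1 : ‖v‖ ^ 2 ≤ 1 := pow_le_one₀ (norm_nonneg v) (hs v hv)
  simp only [innerₛₗ_apply_apply] at hle
  rw [hexpand, inner_sub_right]
  nlinarith [sq_nonneg ‖x‖]

lemma exists_forall_mem_norm_sum_sub_sq_le {V : ι → Set E} (F : Finset ι)
    (hV : ∀ i ∈ F, ∀ v ∈ V i, ‖v‖ ≤ 1) {y : ι → E} (hy : ∀ i ∈ F, y i ∈ convexHull ℝ (V i)) :
    ∃ v : ι → E, (∀ i ∈ F, v i ∈ V i) ∧ ‖∑ i ∈ F, (v i - y i)‖ ^ 2 ≤ #F := by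
  classical
  induction F using Finset.induction_on with
  | empty => exact ⟨y, by simp, by simp⟩
  | insert j F hj ih =>
    obtain ⟨v, hvV, hv⟩ := ih (fun i hi => hV i (mem_insert_of_mem hi))
      fun i hi => hy i (mem_insert_of_mem hi)
    obtain ⟨a, haV, ha⟩ := exists_mem_norm_add_sub_sq_le (hV j (mem_insert_self j F))
      (hy j (mem_insert_self j F)) (∑ i ∈ F, (v i - y i))
    refine ⟨Function.update v j a, fun i hi => ?_, ?_⟩
    · rcases mem_insert.mp hi with rfl | hi
      · simpa using haV
      · simpa [Function.update_of_ne (ne_of_mem_of_not_mem hi hj)] using hvV i hi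
    · have hsum : ∑ i ∈ F, (Function.update v j a i - y i) = ∑ i ∈ F, (v i - y i) :=
        sum_congr rfl fun i hi => by rw [Function.update_of_ne (ne_of_mem_of_not_mem hi hj)]
      rw [sum_insert hj, Function.update_self, hsum, add_comm, card_insert_of_notMem hj]
      push_cast
      linarith

end Rounding

theorem colorful_balancing_euclidean_general (d n : ℕ)
    (V : Fin n → Finset (EuclideanSpace ℝ (Fin d)))
    (hball : ∀ i, ∀ v ∈ V i, ‖v‖ ≤ 1)
    (h0 : (0 : EuclideanSpace ℝ (Fin d)) ∈
      ∑ i, convexHull ℝ (V i : Set (EuclideanSpace ℝ (Fin d)))) :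
    ∃ v : Fin n → EuclideanSpace ℝ (Fin d),
      (∀ i, v i ∈ V i) ∧ ‖∑ i, v i‖ ≤ Real.sqrt d := by
  classical
  obtain ⟨y, hy, hy0, F, hF, hyF⟩ :=
    exists_forall_notMem_card_le_finrank_of_mem_sum_convexHull V h0
  obtain ⟨v, hvV, hv⟩ :=
    exists_forall_mem_norm_sum_sub_sq_le F (fun i _ => hball i) fun i _ => hy i
  refine ⟨fun i => if i ∈ F then v i else y i, fun i => ?_, ?_⟩
  · dsimp only
    split_ifs with hi
    exacts [hvV i hi, hyF i hi]
  have hsum : ∑ i, (if i ∈ F then v i else y i) = ∑ i ∈ F, (v i - y i) :=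
    calc ∑ i, (if i ∈ F then v i else y i)
        = ∑ i, (y i + if i ∈ F then v i - y i else 0) :=
          sum_congr rfl fun i _ => by split_ifs <;> abel
      _ = ∑ i ∈ F, (v i - y i) := by rw [sum_add_distrib, hy0, zero_add, sum_ite_mem, univ_inter]
  rw [hsum, Real.le_sqrt (norm_nonneg _) d.cast_nonneg]
  rw [finrank_euclideanSpace_fin] at hF
  exact hv.trans (by exact_mod_cast hF)

theorem colorful_balancing_euclidean (d n : ℕ)
    (V : Fin n → Finset (EuclideanSpace ℝ (Fin d)))
    (hne : ∀ i, (V i).Nonempty)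
    (hball : ∀ i, ∀ v ∈ V i, ‖v‖ ≤ 1)
    (h0 : (0 : EuclideanSpace ℝ (Fin d)) ∈
      ∑ i, convexHull ℝ (V i : Set (EuclideanSpace ℝ (Fin d)))) :
    ∃ v : Fin n → EuclideanSpace ℝ (Fin d),
      (∀ i, v i ∈ V i) ∧ ‖∑ i, v i‖ ≤ Real.sqrt d :=
  colorful_balancing_euclidean_general d n V hball h0
end

section
/- Let $U_1, \ldots, U_k$ be finite nonempty families of vectors in the closed Euclidean unit ball of $\mathbb{R}^d$, and let $x \in \mathrm{conv}(U_1) + \cdots + \mathrm{conv}(U_k)$. Then there exist vectors $u_i \in U_i$ for $i \in [k]$ such that $\|u_1 + \cdots + u_k - x\|_2 \leq \sqrt{k}$. -/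
open scoped Pointwise RealInnerProductSpace
open Finset

local notation "E" d => EuclideanSpace ℝ (Fin d)

-- step lemma
lemma step_lemma {d : ℕ} (v : EuclideanSpace ℝ (Fin d)) (s : Finset (EuclideanSpace ℝ (Fin d)))
    (hball : ∀ u ∈ s, ‖u‖ ≤ 1) (y : EuclideanSpace ℝ (Fin d))
    (hy : y ∈ convexHull ℝ (s : Set (EuclideanSpace ℝ (Fin d)))) :
    ∃ u ∈ s, ‖v + (u - y)‖ ^ 2 ≤ ‖v‖ ^ 2 + 1 := by
  rw [Finset.convexHull_eq] at hy
  obtain ⟨w, hw0, hw1, hwy⟩ := hy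
  have hsum : ∑ u ∈ s, w u • u = y := by
    rw [← hwy, Finset.centerMass_eq_of_sum_1 _ _ hw1]
    rfl
  -- average of inner products
  have hinner : (∑ u ∈ s, w u * ⟪v, u - y⟫) = 0 := by
    have : ∑ u ∈ s, w u • (u - y) = 0 := by
      simp only [smul_sub, Finset.sum_sub_distrib, hsum, ← Finset.sum_smul, hw1, one_smul,
        sub_self]
    calc (∑ u ∈ s, w u * ⟪v, u - y⟫) = ⟪v, ∑ u ∈ s, w u • (u - y)⟫ := by
          rw [inner_sum]; exact Finset.sum_congr rfl fun u _ => by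
            rw [real_inner_smul_right]
      _ = 0 := by rw [this, inner_zero_right]
  have hinner2 : (∑ u ∈ s, w u * ⟪u, y⟫) = ‖y‖ ^ 2 := by
    calc (∑ u ∈ s, w u * ⟪u, y⟫) = ⟪∑ u ∈ s, w u • u, y⟫ := by
          rw [sum_inner]; exact Finset.sum_congr rfl fun u _ => by
            rw [real_inner_smul_left]
      _ = ‖y‖ ^ 2 := by rw [hsum, real_inner_self_eq_norm_sq]
  have hnormsq : ∑ u ∈ s, w u * ‖u - y‖ ^ 2 ≤ 1 := by
    have expand : ∀ u ∈ s, w u * ‖u - y‖ ^ 2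
        = w u * ‖u‖ ^ 2 - 2 * (w u * ⟪u, y⟫) + w u * ‖y‖ ^ 2 := by
      intro u _
      rw [norm_sub_sq_real]; ring
    rw [Finset.sum_congr rfl expand]
    rw [Finset.sum_add_distrib, Finset.sum_sub_distrib, ← Finset.mul_sum, hinner2,
      ← Finset.sum_mul, hw1, one_mul]
    have h1 : ∑ u ∈ s, w u * ‖u‖ ^ 2 ≤ 1 := by
      calc ∑ u ∈ s, w u * ‖u‖ ^ 2 ≤ ∑ u ∈ s, w u * 1 := by
            refine Finset.sum_le_sum fun u hu => ?_
            have := hball u hu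
            have h2 : ‖u‖ ^ 2 ≤ 1 := by nlinarith [norm_nonneg u]
            exact mul_le_mul_of_nonneg_left h2 (hw0 u hu)
        _ = 1 := by rw [← Finset.sum_mul, hw1, one_mul]
    nlinarith [sq_nonneg ‖y‖]
  have hT : ∑ u ∈ s, w u * ‖v + (u - y)‖ ^ 2 ≤ ‖v‖ ^ 2 + 1 := by
    have expand : ∀ u ∈ s, w u * ‖v + (u - y)‖ ^ 2
        = w u * ‖v‖ ^ 2 + 2 * (w u * ⟪v, u - y⟫) + w u * ‖u - y‖ ^ 2 := by
      intro u _
      rw [norm_add_sq_real]; ring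
    rw [Finset.sum_congr rfl expand, Finset.sum_add_distrib, Finset.sum_add_distrib,
      ← Finset.mul_sum, hinner, ← Finset.sum_mul, hw1, one_mul]
    nlinarith [hnormsq]
  by_contra h
  push_neg at h
  obtain ⟨u0, hu0, hwu0⟩ := Finset.exists_ne_zero_of_sum_ne_zero (by rw [hw1]; norm_num : ∑ u ∈ s, w u ≠ 0)
  have : ‖v‖ ^ 2 + 1 < ∑ u ∈ s, w u * ‖v + (u - y)‖ ^ 2 := by
    calc ‖v‖ ^ 2 + 1 = ∑ u ∈ s, w u * (‖v‖ ^ 2 + 1) := by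
          rw [← Finset.sum_mul, hw1, one_mul]
      _ < ∑ u ∈ s, w u * ‖v + (u - y)‖ ^ 2 := by
          refine Finset.sum_lt_sum (fun u hu => ?_) ⟨u0, hu0, ?_⟩
          · exact mul_le_mul_of_nonneg_left (le_of_lt (h u hu)) (hw0 u hu)
          · have hpos : 0 < w u0 := lt_of_le_of_ne (hw0 u0 hu0) (Ne.symm hwu0)
            exact mul_lt_mul_of_pos_left (h u0 hu0) hpos
  linarith [hT]

lemma aux_approx {d : ℕ} : ∀ (k : ℕ) (U : Fin k → Finset (EuclideanSpace ℝ (Fin d)))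
    (hball : ∀ i, ∀ u ∈ U i, ‖u‖ ≤ 1)
    (x : EuclideanSpace ℝ (Fin d))
    (hx : x ∈ ∑ i, convexHull ℝ (U i : Set (EuclideanSpace ℝ (Fin d)))),
    ∃ u : Fin k → EuclideanSpace ℝ (Fin d),
      (∀ i, u i ∈ U i) ∧ ‖(∑ i, u i) - x‖ ^ 2 ≤ (k : ℝ) := by
  intro k
  induction k with
  | zero =>
    intro U hball x hx
    simp only [Finset.univ_eq_empty, Finset.sum_empty, Set.mem_zero] at hx
    exact ⟨fun i => i.elim0, fun i => i.elim0, by simp [hx]⟩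
  | succ k ih =>
    intro U hball x hx
    rw [Fin.sum_univ_succ] at hx
    obtain ⟨a, ha, y, hy, hay⟩ := Set.mem_add.mp hx
    obtain ⟨u', hu', hn'⟩ := ih (fun i => U i.succ) (fun i => hball i.succ) y hy
    obtain ⟨u0, hu0, hn0⟩ := step_lemma ((∑ i, u' i) - y) (U 0) (hball 0) a ha
    refine ⟨Fin.cons u0 u', fun i => ?_, ?_⟩
    · refine Fin.cases ?_ ?_ i
      · simpa using hu0
      · intro j; simpa using hu' j
    · have hs : (∑ i, Fin.cons u0 u' i) = u0 + ∑ i, u' i := by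
        rw [Fin.sum_univ_succ]; simp
      have heq : (∑ i, Fin.cons u0 u' i) - x = ((∑ i, u' i) - y) + (u0 - a) := by
        rw [hs, ← hay]; abel
      rw [heq]
      push_cast
      calc ‖((∑ i, u' i) - y) + (u0 - a)‖ ^ 2 ≤ ‖(∑ i, u' i) - y‖ ^ 2 + 1 := hn0
        _ ≤ (k : ℝ) + 1 := by linarith

theorem colorful_vertex_approx_euclidean (d k : ℕ)
    (U : Fin k → Finset (EuclideanSpace ℝ (Fin d)))
    (hne : ∀ i, (U i).Nonempty)
    (hball : ∀ i, ∀ u ∈ U i, ‖u‖ ≤ 1)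
    (x : EuclideanSpace ℝ (Fin d))
    (hx : x ∈ ∑ i, convexHull ℝ (U i : Set (EuclideanSpace ℝ (Fin d)))) :
    ∃ u : Fin k → EuclideanSpace ℝ (Fin d),
      (∀ i, u i ∈ U i) ∧ ‖(∑ i, u i) - x‖ ≤ Real.sqrt k := by
  obtain ⟨u, hu, hn⟩ := aux_approx k U hball x hx
  refine ⟨u, hu, ?_⟩
  rw [show ‖(∑ i, u i) - x‖ = Real.sqrt (‖(∑ i, u i) - x‖ ^ 2) by
    rw [Real.sqrt_sq (norm_nonneg _)]]
  exact Real.sqrt_le_sqrt hn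
end

section
/- Let $V_1, \ldots, V_n$ be finite nonempty families of vectors in $\mathbb{R}^d$ with $0 \in \mathrm{conv}(V_1) + \cdots + \mathrm{conv}(V_n)$. Then there exist convex coefficient vectors $\lambda_i$ on each $V_i$ (i.e., $\lambda_i(v) \geq 0$ and $\sum_{v \in V_i} \lambda_i(v) = 1$) such that $\sum_{i=1}^n \sum_{v \in V_i} \lambda_i(v) v = 0$, at most $d$ of the indices $i$ have $\lambda_i$ with some coordinate strictly between $0$ and $1$, and the total number of coordinates (over all $i$ and $v$) strictly between $0$ and $1$ is at most $2d$. -/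
/-!
Among all representations of `0`, take one with the fewest coefficients in `(0, 1)`; say `m` of
them, spread over `k` families. Each such family contains at least two of them, so `2k ≤ m`. If
`m > k + d`, the conditions "each family sums to `0`" and "the weighted vector sum is `0`" on
the fractional coordinates (`k + d` linear equations) have a nonzero solution; moving the
coefficients along it until one of them reaches `0` or `1` gives a representation with fewer
fractional coefficients. Hence `m ≤ k + d`, which gives `k ≤ d` and `m ≤ 2d`.
-/

open Finset

open scoped Pointwise

namespace ShapleyFolkman

section UnitInterval

variable {x t ν : ℝ}

lemma add_mul_mem_Icc_iff (hx : x ∈ Set.Ioo 0 1) (ht : 0 ≤ t) :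
    x + t * ν ∈ Set.Icc 0 1 ↔ t * max (ν / (1 - x)) (-ν / x) ≤ 1 := by
  obtain ⟨hx0, hx1⟩ := hx
  rw [mul_max_of_nonneg _ _ ht, max_le_iff, ← mul_div_assoc, ← mul_div_assoc,
    div_le_one (by linarith), div_le_one hx0, Set.mem_Icc]
  constructor <;> rintro ⟨_, _⟩ <;> constructor <;> linarith

lemma add_mul_mem_Ioo_iff (hx : x ∈ Set.Ioo 0 1) (ht : 0 ≤ t) :
    x + t * ν ∈ Set.Ioo 0 1 ↔ t * max (ν / (1 - x)) (-ν / x) < 1 := by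
  obtain ⟨hx0, hx1⟩ := hx
  rw [mul_max_of_nonneg _ _ ht, max_lt_iff, ← mul_div_assoc, ← mul_div_assoc,
    div_lt_one (by linarith), div_lt_one hx0, Set.mem_Ioo]
  constructor <;> rintro ⟨_, _⟩ <;> constructor <;> linarith

lemma max_div_pos_of_ne_zero (hx : x ∈ Set.Ioo 0 1) (hν : ν ≠ 0) :
    0 < max (ν / (1 - x)) (-ν / x) := by
  obtain ⟨hx0, hx1⟩ := hx
  rcases hν.lt_or_gt with hν | hν
  · exact lt_max_of_lt_right (div_pos (neg_pos.2 hν) hx0)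
  · exact lt_max_of_lt_left (div_pos hν (by linarith))

/-- The step is `t = (max_p s p)⁻¹`, where `s p` is the rate at which coordinate `p` moves towards
`0` or `1` (see `add_mul_mem_Icc_iff`). -/
lemma exists_add_mul_mem_Icc_not_mem_Ioo {α : Type*} {F : Finset α} {x ν : α → ℝ}
    (hx : ∀ p ∈ F, x p ∈ Set.Ioo 0 1) (hν : ∃ p ∈ F, ν p ≠ 0) :
    ∃ t : ℝ, (∀ p ∈ F, x p + t * ν p ∈ Set.Icc 0 1) ∧ ∃ p ∈ F, x p + t * ν p ∉ Set.Ioo 0 1 := by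
  set s : α → ℝ := fun p => max (ν p / (1 - x p)) (-ν p / x p)
  obtain ⟨q, hqF, hq⟩ := hν
  obtain ⟨p₀, hp₀F, hp₀max⟩ := F.exists_max_image s ⟨q, hqF⟩
  have hs₀ : 0 < s p₀ := (max_div_pos_of_ne_zero (hx q hqF) hq).trans_le (hp₀max q hqF)
  have ht : 0 ≤ (s p₀)⁻¹ := inv_nonneg.2 hs₀.le
  refine ⟨(s p₀)⁻¹, fun p hp => ?_, p₀, hp₀F, ?_⟩
  · rw [add_mul_mem_Icc_iff (hx p hp) ht, inv_mul_le_iff₀ hs₀, mul_one]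
    exact hp₀max p hp
  · rw [add_mul_mem_Ioo_iff (hx p₀ hp₀F) ht, inv_mul_cancel₀ hs₀.ne']
    exact lt_irrefl 1

lemma exists_ne_mem_Ioo_of_sum_eq_one {α : Type*} {s : Finset α} {f : α → ℝ}
    (hf : ∀ a ∈ s, 0 ≤ f a) (hs : ∑ a ∈ s, f a = 1) {a : α} (ha : a ∈ s)
    (hfa : f a ∈ Set.Ioo 0 1) : ∃ b ∈ s, b ≠ a ∧ f b ∈ Set.Ioo 0 1 := by
  classical
  have hrest : ∑ b ∈ s.erase a, f b = 1 - f a := by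
    rw [← hs, ← add_sum_erase s f ha, add_sub_cancel_left]
  obtain ⟨b, hb, hfb⟩ : ∃ b ∈ s.erase a, 0 < f b :=
    exists_lt_of_sum_lt (by rw [sum_const_zero, hrest]; linarith [hfa.2])
  have hfb_le : f b ≤ 1 - f a := hrest ▸ single_le_sum (fun c hc => hf c (mem_of_mem_erase hc)) hb
  exact ⟨b, mem_of_mem_erase hb, ne_of_mem_erase hb, hfb, by linarith [hfa.1]⟩

end UnitInterval

section Pairs

variable {ι E : Type*} [Fintype ι] [DecidableEq ι] [DecidableEq E] (V : ι → Finset E)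

def pairs : Finset (ι × E) := univ.biUnion fun i => {i} ×ˢ V i

variable {V}

@[simp]
lemma mem_pairs {p : ι × E} : p ∈ pairs V ↔ p.2 ∈ V p.1 := by
  simp only [pairs, mem_biUnion, mem_univ, mem_product, mem_singleton, true_and]
  exact ⟨fun ⟨i, hi, hv⟩ => hi ▸ hv, fun hv => ⟨p.1, rfl, hv⟩⟩

lemma sum_sum_eq_sum_of_support_subset {M : Type*} [AddCommMonoid M] {F : Finset (ι × E)}
    (hFV : ∀ p ∈ F, p.2 ∈ V p.1) {f : ι × E → M} (hf : ∀ p ∉ F, f p = 0) :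
    ∑ i, ∑ v ∈ V i, f (i, v) = ∑ p ∈ F, f p := by
  rw [← sum_finset_product (pairs V) univ V (by simp)]
  exact (sum_subset (fun p hp => mem_pairs.2 (hFV p hp)) fun p _ hp => hf p hp).symm

noncomputable def fracPairs (V : ι → Finset E) (w : ι → E → ℝ) : Finset (ι × E) :=
  {p ∈ pairs V | w p.1 p.2 ∈ Set.Ioo 0 1}

noncomputable def fracFams (V : ι → Finset E) (w : ι → E → ℝ) : Finset ι :=
  (fracPairs V w).image Prod.fst

variable {w : ι → E → ℝ}

lemma mem_fracPairs {p : ι × E} :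
    p ∈ fracPairs V w ↔ p.2 ∈ V p.1 ∧ w p.1 p.2 ∈ Set.Ioo 0 1 := by
  simp [fracPairs]

lemma mem_fracFams {i : ι} : i ∈ fracFams V w ↔ ∃ v ∈ V i, w i v ∈ Set.Ioo 0 1 := by
  simp [fracFams, mem_fracPairs]

lemma coe_fracPairs :
    (fracPairs V w : Set (ι × E)) = {p | p.2 ∈ V p.1 ∧ w p.1 p.2 ∈ Set.Ioo 0 1} :=
  Set.ext fun _ => mem_fracPairs

lemma coe_fracFams : (fracFams V w : Set ι) = {i | ∃ v ∈ V i, w i v ∈ Set.Ioo 0 1} :=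
  Set.ext fun _ => mem_fracFams

end Pairs

section Combination

variable {ι E : Type*} [Fintype ι] [AddCommGroup E] [Module ℝ E]

structure IsZeroCombination (V : ι → Finset E) (w : ι → E → ℝ) : Prop where
  nonneg : ∀ i, ∀ v ∈ V i, 0 ≤ w i v
  sum_eq_one : ∀ i, ∑ v ∈ V i, w i v = 1
  sum_smul_eq_zero : ∑ i, ∑ v ∈ V i, w i v • v = 0

variable {V : ι → Finset E}

lemma exists_isZeroCombination (h0 : (0 : E) ∈ ∑ i, convexHull ℝ (V i : Set E)) :
    ∃ w, IsZeroCombination V w := by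
  obtain ⟨x, hx, hsum⟩ := (Set.mem_fintype_sum _ _).1 h0
  choose w hw₀ hw₁ hwx using fun i => Finset.mem_convexHull'.1 (hx i)
  exact ⟨w, hw₀, hw₁, by simp only [hwx, hsum]⟩

variable [DecidableEq ι] [DecidableEq E]

lemma exists_balanced_direction [FiniteDimensional ℝ E] {F : Finset (ι × E)}
    (hFV : ∀ p ∈ F, p.2 ∈ V p.1) (hcard : #(F.image Prod.fst) + Module.finrank ℝ E < #F) :
    ∃ ν : ι × E → ℝ, (∀ p ∉ F, ν p = 0) ∧ (∃ p ∈ F, ν p ≠ 0) ∧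
      (∀ i, ∑ v ∈ V i, ν (i, v) = 0) ∧ ∑ i, ∑ v ∈ V i, ν (i, v) • v = 0 := by
  set K := F.image Prod.fst
  -- a relation among the vectors `(v, 𝟙_i)`, `(i, v) ∈ F`, balances every family and the vector sum
  let b : ι × E → E × (K → ℝ) := fun p => (p.2, fun k => if p.1 = k then 1 else 0)
  have hdep : ¬ LinearIndepOn ℝ b (F : Set (ι × E)) := fun h => by
    have := h.fintype_card_le_finrank
    simp only [Module.finrank_prod, Module.finrank_fintype_fun_eq_card, Finset.coe_sort_coe,
      Fintype.card_coe] at this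
    omega
  obtain ⟨g, hg, q, hqF, hq⟩ := not_linearIndepOn_finset_iff.1 hdep
  set ν : ι × E → ℝ := fun p => if p ∈ F then g p else 0
  have hνF : ∀ p ∉ F, ν p = 0 := fun p hp => if_neg hp
  have hνb : ∑ i, ∑ v ∈ V i, ν (i, v) • b (i, v) = 0 := by
    rw [sum_sum_eq_sum_of_support_subset (f := fun p => ν p • b p) hFV
      (fun p hp => by simp [hνF p hp]), ← hg]
    exact sum_congr rfl fun p hp => by simp [ν, hp]
  refine ⟨ν, hνF, ⟨q, hqF, by simpa [ν, hqF]⟩, fun i => ?_, by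
    simpa [b, Prod.fst_sum] using congr_arg Prod.fst hνb⟩
  by_cases hi : i ∈ K
  · simpa [b, Prod.snd_sum, Finset.sum_apply] using congr_fun (congr_arg Prod.snd hνb) ⟨i, hi⟩
  · exact sum_eq_zero fun v _ => hνF _ fun h => hi (mem_image_of_mem Prod.fst h)

end Combination

section Fractional

variable {ι E : Type*} [Fintype ι] [DecidableEq ι] [AddCommGroup E] [Module ℝ E] [DecidableEq E]
  {V : ι → Finset E} {w : ι → E → ℝ}

namespace IsZeroCombination

lemma two_mul_card_fracFams_le (hw : IsZeroCombination V w) :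
    2 * #(fracFams V w) ≤ #(fracPairs V w) := by
  refine mul_card_image_le_card _ 2 fun i hi => ?_
  obtain ⟨v, hv, hwv⟩ := mem_fracFams.1 hi
  obtain ⟨u, hu, hne, hwu⟩ :=
    exists_ne_mem_Ioo_of_sum_eq_one (hw.nonneg i) (hw.sum_eq_one i) hv hwv
  calc 2 = #{(i, u), (i, v)} := by rw [card_pair (by simpa using hne)]
    _ ≤ #{p ∈ fracPairs V w | p.1 = i} :=
      card_le_card (by simp [insert_subset_iff, mem_fracPairs, *])

lemma exists_fracPairs_ssubset [FiniteDimensional ℝ E] (hw : IsZeroCombination V w)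
    (hlt : #(fracFams V w) + Module.finrank ℝ E < #(fracPairs V w)) :
    ∃ w', IsZeroCombination V w' ∧ fracPairs V w' ⊂ fracPairs V w := by
  set F := fracPairs V w
  obtain ⟨ν, hνF, hν, hνsum, hνsmul⟩ :=
    exists_balanced_direction (fun p hp => (mem_fracPairs.1 hp).1) hlt
  obtain ⟨t, ht, p₀, hp₀F, hp₀⟩ := exists_add_mul_mem_Icc_not_mem_Ioo
    (x := fun p => w p.1 p.2) (fun p hp => (mem_fracPairs.1 hp).2) hν
  set w' : ι → E → ℝ := fun i v => w i v + t * ν (i, v)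
  have hw'F : ∀ p ∉ F, w' p.1 p.2 = w p.1 p.2 := fun p hp => by simp [w', hνF p hp]
  refine ⟨w', ⟨fun i v hv => ?_, fun i => ?_, ?_⟩, ?_⟩
  · by_cases hp : (i, v) ∈ F
    · exact (ht _ hp).1
    · exact (hw'F _ hp).symm ▸ hw.nonneg i v hv
  · simp [w', sum_add_distrib, ← mul_sum, hw.sum_eq_one, hνsum]
  · simp [w', add_smul, sum_add_distrib, mul_smul, ← smul_sum, hw.sum_smul_eq_zero, hνsmul]
  · have hsub : fracPairs V w' ⊆ F := fun p hp => by
      by_contra hpF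
      rw [mem_fracPairs, hw'F p hpF] at hp
      exact hpF (mem_fracPairs.2 hp)
    exact (ssubset_iff_of_subset hsub).2 ⟨p₀, hp₀F, fun h => hp₀ (mem_fracPairs.1 h).2⟩

lemma exists_card_fracPairs_le [FiniteDimensional ℝ E] (hw : IsZeroCombination V w) :
    ∃ w', IsZeroCombination V w' ∧ #(fracPairs V w') ≤ #(fracFams V w') + Module.finrank ℝ E := by
  induction h : #(fracPairs V w) using Nat.strong_induction_on generalizing w with
  | _ m ih =>
    by_cases hle : #(fracPairs V w) ≤ #(fracFams V w) + Module.finrank ℝ E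
    · exact ⟨w, hw, hle⟩
    · obtain ⟨w', hw', hss⟩ := hw.exists_fracPairs_ssubset (not_le.1 hle)
      exact ih _ (h ▸ card_lt_card hss) hw' rfl

end IsZeroCombination

end Fractional

end ShapleyFolkman

theorem shapley_folkman_reduction_general (d n : ℕ)
    (V : Fin n → Finset (Fin d → ℝ))
    (h0 : (0 : Fin d → ℝ) ∈ ∑ i, convexHull ℝ (V i : Set (Fin d → ℝ))) :
    ∃ lam : Fin n → (Fin d → ℝ) → ℝ,
      (∀ i, ∀ v ∈ V i, 0 ≤ lam i v) ∧
      (∀ i, ∑ v ∈ V i, lam i v = 1) ∧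
      (∑ i, ∑ v ∈ V i, lam i v • v = 0) ∧
      {i : Fin n | ∃ v ∈ V i, lam i v ∈ Set.Ioo (0 : ℝ) 1}.ncard ≤ d ∧
      {p : Fin n × (Fin d → ℝ) |
        p.2 ∈ V p.1 ∧ lam p.1 p.2 ∈ Set.Ioo (0 : ℝ) 1}.ncard ≤ 2 * d := by
  classical
  obtain ⟨w, hw⟩ := ShapleyFolkman.exists_isZeroCombination h0
  obtain ⟨lam, hlam, hcard⟩ := hw.exists_card_fracPairs_le
  have hfams := hlam.two_mul_card_fracFams_le
  rw [Module.finrank_fin_fun] at hcard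
  refine ⟨lam, hlam.nonneg, hlam.sum_eq_one, hlam.sum_smul_eq_zero, ?_, ?_⟩
  · rw [← ShapleyFolkman.coe_fracFams, Set.ncard_coe_finset]; omega
  · rw [← ShapleyFolkman.coe_fracPairs, Set.ncard_coe_finset]; omega

theorem shapley_folkman_reduction (d n : ℕ)
    (V : Fin n → Finset (Fin d → ℝ))
    (hne : ∀ i, (V i).Nonempty)
    (h0 : (0 : Fin d → ℝ) ∈ ∑ i, convexHull ℝ (V i : Set (Fin d → ℝ))) :
    ∃ lam : Fin n → (Fin d → ℝ) → ℝ,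
      (∀ i, ∀ v ∈ V i, 0 ≤ lam i v) ∧
      (∀ i, ∑ v ∈ V i, lam i v = 1) ∧
      (∑ i, ∑ v ∈ V i, lam i v • v = 0) ∧
      {i : Fin n | ∃ v ∈ V i, lam i v ∈ Set.Ioo (0 : ℝ) 1}.ncard ≤ d ∧
      {p : Fin n × (Fin d → ℝ) |
        p.2 ∈ V p.1 ∧ lam p.1 p.2 ∈ Set.Ioo (0 : ℝ) 1}.ncard ≤ 2 * d :=
  shapley_folkman_reduction_general d n V h0
end

section
/- Let $V_1, \ldots, V_n$ be finite nonempty sets of Euclidean unit vectors in $\mathbb{R}^d$ such that $0 \in \mathrm{conv}(V_i)$ for every $i \in [n]$. Then there exists a selection $v_i \in V_i$ for each $i$ such that $\|v_1 + \cdots + v_n\|_2 \geq \sqrt{n}$. -/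
/-!
Choose the vectors greedily. If `s` is the sum of the vectors chosen so far, then since
`0 ∈ conv V` some `v ∈ V` has `⟪s, v⟫ ≥ 0` (otherwise `V` lies in an open half-space avoiding
`0`), and then `‖s + v‖² = ‖s‖² + 2⟪s, v⟫ + ‖v‖² ≥ ‖s‖² + ‖v‖²`. Hence the squared norm of the
final sum is at least the sum of the squared norms, which is `n` for unit vectors.
-/

open scoped RealInnerProductSpace

variable {E : Type*} [NormedAddCommGroup E] [InnerProductSpace ℝ E]

theorem exists_mem_inner_nonneg_of_zero_mem_convexHull {V : Set E}
    (h0 : (0 : E) ∈ convexHull ℝ V) (x : E) : ∃ v ∈ V, 0 ≤ ⟪x, v⟫ := by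
  by_contra! h
  have hV : V ⊆ {y | ⟪x, y⟫ < 0} := h
  have hx := convexHull_min hV (convex_halfSpace_lt (innerₗ E x).isLinear 0) h0
  simp at hx

theorem exists_sum_norm_sq_le_norm_sum_sq {ι : Type*} (V : ι → Set E)
    (h0 : ∀ i, (0 : E) ∈ convexHull ℝ (V i)) (s : Finset ι) :
    ∃ v : ι → E, (∀ i, v i ∈ V i) ∧ ∑ i ∈ s, ‖v i‖ ^ 2 ≤ ‖∑ i ∈ s, v i‖ ^ 2 := by
  classical
  induction s using Finset.induction_on with
  | empty =>
    choose v hv using fun i => (convexHull_nonempty_iff.mp ⟨0, h0 i⟩)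
    exact ⟨v, hv, by simp⟩
  | insert i s hi ih =>
    obtain ⟨v, hv, hsum⟩ := ih
    obtain ⟨w, hw, hinner⟩ := exists_mem_inner_nonneg_of_zero_mem_convexHull (h0 i) (∑ j ∈ s, v j)
    have hupdate : ∀ j ∈ s, Function.update v i w j = v j := fun j hj =>
      Function.update_of_ne (ne_of_mem_of_not_mem hj hi) w v
    refine ⟨Function.update v i w, fun j => ?_, ?_⟩
    · rcases eq_or_ne j i with rfl | hj
      · simpa using hw
      · simpa [hj] using hv j
    · rw [Finset.sum_insert hi, Finset.sum_insert hi, Finset.sum_congr rfl hupdate,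
        Finset.sum_congr rfl fun j hj => congrArg (‖·‖ ^ 2) (hupdate j hj),
        Function.update_self, norm_add_sq_real, real_inner_comm]
      linarith

theorem anti_balancing_unit_vectors_general (d n : ℕ)
    (V : Fin n → Finset (EuclideanSpace ℝ (Fin d)))
    (hunit : ∀ i, ∀ v ∈ V i, ‖v‖ = 1)
    (h0 : ∀ i, (0 : EuclideanSpace ℝ (Fin d)) ∈
      convexHull ℝ (V i : Set (EuclideanSpace ℝ (Fin d)))) :
    ∃ v : Fin n → EuclideanSpace ℝ (Fin d),
      (∀ i, v i ∈ V i) ∧ Real.sqrt n ≤ ‖∑ i, v i‖ := by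
  obtain ⟨v, hv, hsq⟩ := exists_sum_norm_sq_le_norm_sum_sq _ h0 Finset.univ
  refine ⟨v, hv, Real.sqrt_le_iff.mpr ⟨norm_nonneg _, ?_⟩⟩
  simpa [hunit _ _ (hv _)] using hsq

theorem anti_balancing_unit_vectors (d n : ℕ)
    (V : Fin n → Finset (EuclideanSpace ℝ (Fin d)))
    (hne : ∀ i, (V i).Nonempty)
    (hunit : ∀ i, ∀ v ∈ V i, ‖v‖ = 1)
    (h0 : ∀ i, (0 : EuclideanSpace ℝ (Fin d)) ∈
      convexHull ℝ (V i : Set (EuclideanSpace ℝ (Fin d)))) :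
    ∃ v : Fin n → EuclideanSpace ℝ (Fin d),
      (∀ i, v i ∈ V i) ∧ Real.sqrt n ≤ ‖∑ i, v i‖ :=
  anti_balancing_unit_vectors_general d n V hunit h0
end

section
/- For every $d \geq 1$ and every $v_1, \ldots, v_n$ in the closed Euclidean unit ball of $\mathbb{R}^d$, there exist signs $\varepsilon_1, \ldots, \varepsilon_n \in \{-1, +1\}$ such that $\|\varepsilon_1 v_1 + \cdots + \varepsilon_n v_n\|_2 \leq \sqrt{d}$. -/
/-!
Among the fractional colourings `x ∈ [-1, 1]ⁿ` with `∑ xᵢ vᵢ = 0`, which form a compact set, take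
an extreme point. If the vectors `vᵢ` with `|xᵢ| < 1` were linearly dependent, `x` could be moved
both ways along a dependence, so there are at most `d` of them. Round each `xᵢ` to `±1` with mean
`xᵢ`: the expected squared norm of `∑ (εᵢ - xᵢ) vᵢ = ∑ εᵢ vᵢ` is `∑ (1 - xᵢ²) ‖vᵢ‖² ≤ d`, and the
rounding is derandomised one coordinate at a time.
-/

open Finset Module Topology

section Polytope

variable {ι M : Type*} [Fintype ι] [AddCommGroup M] [Module ℝ M]

def balancingPolytope (v : ι → M) : Set (ι → ℝ) :=
  {y | (∀ i, |y i| ≤ 1) ∧ ∑ i, y i • v i = 0}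

lemma isCompact_balancingPolytope (v : ι → M) : IsCompact (balancingPolytope v) := by
  have hK : balancingPolytope v =
      Metric.closedBall 0 1 ∩ LinearMap.ker (Fintype.linearCombination ℝ v) := by
    ext y
    simp [balancingPolytope, pi_norm_le_iff_of_nonneg, Fintype.linearCombination_apply]
  rw [hK]
  exact (isCompact_closedBall 0 1).inter_right (Submodule.closed_of_finiteDimensional _)

lemma exists_ne_zero_add_smul_mem_balancingPolytope {v : ι → M} {x l : ι → ℝ}
    (hx : x ∈ balancingPolytope v) (hlv : ∑ i, l i • v i = 0)
    (hl : ∀ i, ¬ |x i| < 1 → l i = 0) :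
    ∃ t : ℝ, t ≠ 0 ∧ x + t • l ∈ balancingPolytope v ∧ x - t • l ∈ balancingPolytope v := by
  have hsum (t : ℝ) : ∑ i, (x + t • l) i • v i = 0 := by
    simp only [Pi.add_apply, Pi.smul_apply, smul_eq_mul, add_smul, mul_smul, sum_add_distrib,
      ← smul_sum, hx.2, hlv, smul_zero, add_zero]
  have hnear : ∀ᶠ t in 𝓝 (0 : ℝ), ∀ i, |x i + t * l i| ≤ 1 := by
    refine Filter.eventually_all.2 fun i => ?_
    by_cases hi : |x i| < 1
    · have hcont : Continuous fun t : ℝ => |x i + t * l i| := by fun_prop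
      filter_upwards [hcont.tendsto' 0 _ (by simp) |>.eventually (gt_mem_nhds hi)] with t ht
      exact ht.le
    · simp [hl i hi, hx.1 i]
  have hsymm := hnear.and ((continuous_neg.tendsto' 0 0 neg_zero).eventually hnear)
  obtain ⟨t, ⟨hplus, hminus⟩, ht⟩ :=
    ((hsymm.filter_mono nhdsWithin_le_nhds).and
      (self_mem_nhdsWithin : {0}ᶜ ∈ 𝓝[≠] (0 : ℝ))).exists
  refine ⟨t, ht, ⟨hplus, hsum t⟩, ?_⟩
  rw [sub_eq_add_neg, ← neg_smul]
  exact ⟨hminus, hsum (-t)⟩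

lemma linearIndepOn_of_mem_extremePoints_balancingPolytope {v : ι → M} {x : ι → ℝ}
    (hx : x ∈ (balancingPolytope v).extremePoints ℝ) : LinearIndepOn ℝ v {i | |x i| < 1} := by
  rw [linearIndepOn_iff]
  intro l hl hlv
  rw [Finsupp.linearCombination_apply, Finsupp.sum_fintype _ _ (by simp)] at hlv
  obtain ⟨t, ht, hplus, hminus⟩ := exists_ne_zero_add_smul_mem_balancingPolytope hx.1 hlv
    fun i hi => (Finsupp.mem_supported' ℝ l).1 hl i hi
  have hmid : x ∈ openSegment ℝ (x + t • ⇑l) (x - t • ⇑l) :=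
    ⟨1 / 2, 1 / 2, by norm_num, by norm_num, by norm_num, by module⟩
  have htl : t • ⇑l = 0 := by simpa using hx.2 hplus hminus hmid
  ext i
  simpa [ht] using congrFun htl i

lemma exists_mem_balancingPolytope_card_le [FiniteDimensional ℝ M] (v : ι → M) :
    ∃ x ∈ balancingPolytope v, #{i | |x i| < 1} ≤ finrank ℝ M := by
  classical
  have hzero : (0 : ι → ℝ) ∈ balancingPolytope v := ⟨by simp, by simp⟩
  obtain ⟨x, hx⟩ := (isCompact_balancingPolytope v).extremePoints_nonempty ⟨0, hzero⟩
  refine ⟨x, hx.1, ?_⟩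
  have := (linearIndepOn_of_mem_extremePoints_balancingPolytope hx).fintype_card_le_finrank
  simpa [Fintype.card_subtype] using this

end Polytope

section Rounding

variable {ι E : Type*} [NormedAddCommGroup E] [InnerProductSpace ℝ E]

lemma exists_sign_norm_add_smul_sq_le (w u : E) {x : ℝ} (hx : |x| ≤ 1) :
    ∃ e : ℝ, (e = 1 ∨ e = -1) ∧ ‖w + (e - x) • u‖ ^ 2 ≤ ‖w‖ ^ 2 + (1 - x ^ 2) * ‖u‖ ^ 2 := by
  obtain ⟨hx₁, hx₂⟩ := abs_le.1 hx
  -- Rounding `x` to `1` with probability `(1 + x) / 2` and to `-1` otherwise has mean `x`.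
  have hmean : (1 + x) * ‖w + (1 - x) • u‖ ^ 2 + (1 - x) * ‖w + (-1 - x) • u‖ ^ 2 =
      2 * (‖w‖ ^ 2 + (1 - x ^ 2) * ‖u‖ ^ 2) := by
    simp only [norm_add_sq_real, norm_smul, inner_smul_right, mul_pow, Real.norm_eq_abs, sq_abs]
    ring
  rcases le_total ‖w + (1 - x) • u‖ ‖w + (-1 - x) • u‖ with h | h
  · refine ⟨1, Or.inl rfl, ?_⟩
    nlinarith [mul_le_mul_of_nonneg_left (pow_le_pow_left₀ (norm_nonneg _) h 2)
      (by linarith : 0 ≤ 1 - x)]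
  · refine ⟨-1, Or.inr rfl, ?_⟩
    nlinarith [mul_le_mul_of_nonneg_left (pow_le_pow_left₀ (norm_nonneg _) h 2)
      (by linarith : 0 ≤ 1 + x)]

lemma exists_signs_norm_sum_sub_smul_sq_le (v : ι → E) {x : ι → ℝ} (hx : ∀ i, |x i| ≤ 1)
    (s : Finset ι) :
    ∃ ε : ι → ℝ, (∀ i, ε i = 1 ∨ ε i = -1) ∧
      ‖∑ i ∈ s, (ε i - x i) • v i‖ ^ 2 ≤ ∑ i ∈ s, (1 - x i ^ 2) * ‖v i‖ ^ 2 := by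
  classical
  induction s using Finset.induction_on with
  | empty => exact ⟨fun _ => 1, fun _ => Or.inl rfl, by simp⟩
  | insert a s ha ih =>
    obtain ⟨ε, hε, hbound⟩ := ih
    obtain ⟨e, he, hstep⟩ :=
      exists_sign_norm_add_smul_sq_le (∑ i ∈ s, (ε i - x i) • v i) (v a) (hx a)
    have hsigns : ∀ i, Function.update ε a e i = 1 ∨ Function.update ε a e i = -1 :=
      (Function.forall_update_iff ε fun _ c => c = 1 ∨ c = -1).2 ⟨he, fun i _ => hε i⟩
    refine ⟨Function.update ε a e, hsigns, ?_⟩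
    have hs : ∑ i ∈ s, (Function.update ε a e i - x i) • v i = ∑ i ∈ s, (ε i - x i) • v i :=
      sum_congr rfl fun i hi => by rw [Function.update_of_ne (ne_of_mem_of_not_mem hi ha)]
    rw [sum_insert ha, sum_insert ha, hs, Function.update_self, add_comm]
    linarith

end Rounding

theorem exists_signs_norm_sum_smul_le_sqrt_finrank {ι E : Type*} [Fintype ι]
    [NormedAddCommGroup E] [InnerProductSpace ℝ E] [FiniteDimensional ℝ E]
    (v : ι → E) (hv : ∀ i, ‖v i‖ ≤ 1) :
    ∃ ε : ι → ℝ, (∀ i, ε i = 1 ∨ ε i = -1) ∧ ‖∑ i, ε i • v i‖ ≤ √(finrank ℝ E) := by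
  classical
  obtain ⟨x, ⟨hx, hxv⟩, hcard⟩ := exists_mem_balancingPolytope_card_le v
  obtain ⟨ε, hε, hround⟩ := exists_signs_norm_sum_sub_smul_sq_le v hx univ
  have hsub : ∑ i, (ε i - x i) • v i = ∑ i, ε i • v i := by
    simp only [sub_smul, sum_sub_distrib, hxv, sub_zero]
  have hterm (i : ι) : (1 - x i ^ 2) * ‖v i‖ ^ 2 ≤ if |x i| < 1 then 1 else 0 := by
    have hv2 : ‖v i‖ ^ 2 ≤ 1 := pow_le_one₀ (norm_nonneg _) (hv i)
    have hx2 : x i ^ 2 ≤ 1 := by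
      rw [← sq_abs]; exact pow_le_one₀ (abs_nonneg _) (hx i)
    split_ifs with hi
    · nlinarith
    · have : x i ^ 2 = 1 := by rw [← sq_abs, le_antisymm (hx i) (not_lt.1 hi), one_pow]
      simp [this]
  refine ⟨ε, hε, Real.le_sqrt_of_sq_le ?_⟩
  calc ‖∑ i, ε i • v i‖ ^ 2 ≤ ∑ i, (1 - x i ^ 2) * ‖v i‖ ^ 2 := hsub ▸ hround
    _ ≤ ∑ i, if |x i| < 1 then (1 : ℝ) else 0 := sum_le_sum fun i _ => hterm i
    _ = #{i | |x i| < 1} := sum_boole _ _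
    _ ≤ finrank ℝ E := by exact_mod_cast hcard

theorem vector_balancing_euclidean_general (d n : ℕ)
    (v : Fin n → EuclideanSpace ℝ (Fin d))
    (hball : ∀ i, ‖v i‖ ≤ 1) :
    ∃ ε : Fin n → ℝ, (∀ i, ε i = 1 ∨ ε i = -1) ∧
      ‖∑ i, ε i • v i‖ ≤ Real.sqrt d := by
  simpa using exists_signs_norm_sum_smul_le_sqrt_finrank v hball

theorem vector_balancing_euclidean (d n : ℕ) (hd : 1 ≤ d)
    (v : Fin n → EuclideanSpace ℝ (Fin d))
    (hball : ∀ i, ‖v i‖ ≤ 1) :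
    ∃ ε : Fin n → ℝ, (∀ i, ε i = 1 ∨ ε i = -1) ∧
      ‖∑ i, ε i • v i‖ ≤ Real.sqrt d :=
  vector_balancing_euclidean_general d n v hball
end
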